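/- Let μ be a regular uncountable cardinal and suppose that for every pair of stationary subsets S₀, S₁ of a regular uncountable cardinal κ contained in a fixed set T, there is a common reflection point (an ordinal ν < κ of uncountable cofinality with S₀ ∩ ν and S₁ ∩ ν both stationary in ν). If κ carries a □(κ)-sequence, then there exist two stationary subsets of κ with no common reflection point. Hence, under the simultaneous-reflection hypothesis for stationary subsets of T = κ, □(κ) fails. -/

import Mathlib

open Ordinal Set

/-- `C` is closed below `κ`: it contains every limit ordinal `α < κ`
in which `C` is unbounded. -/
def IsClosedIn (C : Set Ordinal) (κ : Ordinal) : Prop :=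
  ∀ α, α < κ → Order.IsSuccLimit α → (∀ β, β < α → ∃ γ ∈ C, β < γ ∧ γ < α) → α ∈ C

/-- `C` is unbounded in `κ`. -/
def IsUnboundedIn (C : Set Ordinal) (κ : Ordinal) : Prop :=
  ∀ α, α < κ → ∃ β ∈ C, α ≤ β ∧ β < κ

/-- `C` is a club (closed unbounded) subset of `κ`. -/
def IsClubIn (C : Set Ordinal) (κ : Ordinal) : Prop :=
  IsClosedIn C κ ∧ IsUnboundedIn C κ

/-- `S` is stationary in `κ`: it meets every club of `κ`. -/
def IsStationaryIn (S : Set Ordinal) (κ : Ordinal) : Prop :=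
  ∀ C, IsClubIn C κ → (S ∩ C).Nonempty

/-- The ordinal `κ` is a regular cardinal. -/
def IsRegularOrd (κ : Ordinal) : Prop := κ.cof.ord = κ

/-- `c` is continuous on `μ`: it preserves suprema at limit ordinals below `μ`. -/
def ContOn (c : Ordinal → Ordinal) (μ : Ordinal) : Prop :=
  ∀ lam, lam < μ → Order.IsSuccLimit lam → c lam = sSup (c '' Iio lam)

/-- `c` maps `μ` cofinally into `κ`. -/
def CofinalMap (c : Ordinal → Ordinal) (μ κ : Ordinal) : Prop :=
  (∀ β, β < μ → c β < κ) ∧ ∀ α, α < κ → ∃ β, β < μ ∧ α ≤ c β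

/-- `c` is strictly increasing on `μ`. -/
def StrictIncOn (c : Ordinal → Ordinal) (μ : Ordinal) : Prop :=
  ∀ β γ, β < γ → γ < μ → c β < c γ

/-- `α` is an accumulation point of `A` (a limit ordinal in which `A ∩ α` is unbounded). -/
def IsAccBelow (A : Set Ordinal) (α : Ordinal) : Prop :=
  Order.IsSuccLimit α ∧ ∀ γ, γ < α → ∃ δ ∈ A, γ < δ ∧ δ < α

/-!
Assume every two stationary subsets of `κ` reflect simultaneously, and for `γ < κ` let
`S γ = {α < κ | γ ∈ acc (C α)}`. If `S γ` and `S γ'` (with `γ < γ'`) reflect together at `ν`,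
then some `α ∈ S γ` and `α' ∈ S γ'` lie in `acc (C ν)`, so coherence makes `γ` and `γ'`
accumulation points of `C ν` and hence `C γ' ∩ γ = C γ`. The set `G` of `γ` with `S γ`
stationary is unbounded: otherwise choose clubs `D γ` disjoint from `S γ` for large `γ`, reflect
their diagonal intersection at some `ν`, and take accumulation points `γ < α` of `C ν` with `α`
in that diagonal intersection; coherence puts `α` into `S γ ∩ D γ`. Therefore the `C γ`,
`γ ∈ G`, cohere into a club `⋃_{γ ∈ G} C γ` threading the sequence.
-/

open scoped Cardinal

theorem isSuccLimit_of_aleph0_lt_cof {ν : Ordinal} (h : ℵ₀ < ν.cof) : Order.IsSuccLimit ν :=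
  one_lt_cof_iff.mp (Cardinal.one_lt_aleph0.trans h)

theorem IsRegularOrd.aleph0_lt_cof {κ : Ordinal} (hκ : IsRegularOrd κ) (hωκ : ω < κ) :
    ℵ₀ < κ.cof := by
  rwa [← Cardinal.ord_lt_ord, Cardinal.ord_aleph0, hκ]

theorem exists_forall_lt_of_card_lt_cof {κ x : Ordinal} (hx : x.card < κ.cof)
    (f : Ordinal → Ordinal) (hf : ∀ γ < x, f γ < κ) : ∃ y < κ, ∀ γ < x, f γ < y := by
  refine ⟨⨆ γ : Iio x, f γ + 1, lift_iSup_add_one_lt_of_lt_cof ?_ fun γ => hf γ γ.2,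
    fun γ hγ => (lt_add_one _).trans_le (Ordinal.le_iSup (fun γ : Iio x => f γ + 1) ⟨γ, hγ⟩)⟩
  rwa [Cardinal.mk_Iio_ordinal, Cardinal.lift_lift, ← lift_cof, Cardinal.lift_lt]

/-- The closing-off argument: `α` is the supremum of an `ω`-chain of `R`-steps starting at `x`,
which stays below `ν` because `cof ν > ω`. -/
theorem exists_isSuccLimit_closed_under {ν : Ordinal} (hν : ℵ₀ < ν.cof)
    (R : Ordinal → Ordinal → Prop) (hR : ∀ a < ν, ∃ b, a < b ∧ b < ν ∧ R a b)
    {x : Ordinal} (hx : x < ν) :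
    ∃ α, x < α ∧ α < ν ∧ Order.IsSuccLimit α ∧ ∀ β < α, ∃ a b, β < a ∧ a < b ∧ b < α ∧ R a b := by
  choose! f hf using hR
  have hlt : ∀ n, f^[n] x < ν := by
    intro n
    induction n with
    | zero => exact hx
    | succ n ih => rw [Function.iterate_succ_apply']; exact (hf _ ih).2.1
  have hstep : ∀ n, f^[n] x < f^[n + 1] x ∧ R (f^[n] x) (f^[n + 1] x) := fun n => by
    rw [Function.iterate_succ_apply']
    exact ⟨(hf _ (hlt n)).1, (hf _ (hlt n)).2.2⟩
  have hlt_nfp : ∀ n, f^[n] x < nfp f x := fun n =>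
    (hstep n).1.trans_le (iterate_le_nfp f x (n + 1))
  have hcofinal : ∀ β < nfp f x, ∃ n, β < f^[n] x := fun β hβ => lt_nfp_iff.mp hβ
  refine ⟨nfp f x, hlt_nfp 0, nfp_lt_ord hν (fun a ha => (hf a ha).2.1) hx, ?_, fun β hβ => ?_⟩
  · refine isSuccLimit_iff.mpr ⟨(hlt_nfp 0).ne_bot, Order.isSuccPrelimit_of_succ_lt fun a ha => ?_⟩
    obtain ⟨n, hn⟩ := hcofinal a ha
    exact (Order.succ_le_of_lt hn).trans_lt (hlt_nfp n)
  · obtain ⟨n, hn⟩ := hcofinal β hβ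
    exact ⟨_, _, hn, (hstep n).1, hlt_nfp (n + 1), (hstep n).2⟩

theorem IsAccBelow.mono {A B : Set Ordinal} {α : Ordinal} (h : IsAccBelow A α) (hAB : A ⊆ B) :
    IsAccBelow B α :=
  ⟨h.1, fun γ hγ => let ⟨δ, hδ, h₁, h₂⟩ := h.2 γ hγ; ⟨δ, hAB hδ, h₁, h₂⟩⟩

theorem IsAccBelow.inter_Iio {A : Set Ordinal} {α β : Ordinal} (h : IsAccBelow A α)
    (hαβ : α ≤ β) : IsAccBelow (A ∩ Iio β) α :=
  ⟨h.1, fun γ hγ => let ⟨δ, hδ, h₁, h₂⟩ := h.2 γ hγ; ⟨δ, ⟨hδ, h₂.trans_le hαβ⟩, h₁, h₂⟩⟩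

theorem IsClosedIn.mem {C : Set Ordinal} {ν α : Ordinal} (hC : IsClosedIn C ν) (hα : α < ν)
    (h : IsAccBelow C α) : α ∈ C :=
  hC α hα h.1 h.2

theorem IsUnboundedIn.exists_gt {C : Set Ordinal} {ν a : Ordinal} (hC : IsUnboundedIn C ν)
    (hν : Order.IsSuccLimit ν) (ha : a < ν) : ∃ c ∈ C, a < c ∧ c < ν :=
  let ⟨c, hc, h₁, h₂⟩ := hC _ (hν.succ_lt ha)
  ⟨c, hc, Order.succ_le_iff.mp h₁, h₂⟩

section Club

variable {ν : Ordinal}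

theorem isClubIn_Iio : IsClubIn (Iio ν) ν :=
  ⟨fun _ hα _ _ => hα, fun x hx => ⟨x, hx, le_rfl, hx⟩⟩

theorem isClubIn_Ioi {c : Ordinal} (hν : Order.IsSuccLimit ν) (hc : c < ν) :
    IsClubIn (Ioi c) ν := by
  refine ⟨fun α _ hα hub => ?_, fun x hx => ?_⟩
  · obtain ⟨γ, hγ, -, hγα⟩ := hub 0 hα.bot_lt
    exact hγ.trans hγα
  · exact ⟨_, Order.lt_succ_of_le (le_max_right x c), (le_max_left x c).trans (Order.le_succ _),
      hν.succ_lt (max_lt hx hc)⟩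

theorem IsClubIn.inter (hν : ℵ₀ < ν.cof) {C D : Set Ordinal} (hC : IsClubIn C ν)
    (hD : IsClubIn D ν) : IsClubIn (C ∩ D) ν := by
  have hlim := isSuccLimit_of_aleph0_lt_cof hν
  refine ⟨fun α hα hαl hub => ⟨hC.1 α hα hαl fun β hβ => ?_, hD.1 α hα hαl fun β hβ => ?_⟩,
    fun x hx => ?_⟩
  · obtain ⟨γ, hγ, h⟩ := hub β hβ; exact ⟨γ, hγ.1, h⟩
  · obtain ⟨γ, hγ, h⟩ := hub β hβ; exact ⟨γ, hγ.2, h⟩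
  have hstep : ∀ a < ν, ∃ b, a < b ∧ b < ν ∧
      (∃ c ∈ C, a < c ∧ c < b) ∧ ∃ d ∈ D, a < d ∧ d < b := by
    intro a ha
    obtain ⟨c, hc, hac, hcν⟩ := hC.2.exists_gt hlim ha
    obtain ⟨d, hd, had, hdν⟩ := hD.2.exists_gt hlim ha
    refine ⟨Order.succ (max c d), hac.trans (Order.lt_succ_of_le (le_max_left _ _)),
      hlim.succ_lt (max_lt hcν hdν), ⟨c, hc, hac, Order.lt_succ_of_le (le_max_left _ _)⟩,
      d, hd, had, Order.lt_succ_of_le (le_max_right _ _)⟩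
  obtain ⟨α, hxα, hαν, hαl, hcof⟩ := exists_isSuccLimit_closed_under hν _ hstep hx
  refine ⟨α, ⟨hC.1 α hαν hαl fun β hβ => ?_, hD.1 α hαν hαl fun β hβ => ?_⟩, hxα.le, hαν⟩
  · obtain ⟨a, b, hβa, -, hbα, ⟨c, hc, hac, hcb⟩, -⟩ := hcof β hβ
    exact ⟨c, hc, hβa.trans hac, hcb.trans hbα⟩
  · obtain ⟨a, b, hβa, -, hbα, -, d, hd, had, hdb⟩ := hcof β hβ
    exact ⟨d, hd, hβa.trans had, hdb.trans hbα⟩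

theorem IsClubIn.isStationaryIn (hν : ℵ₀ < ν.cof) {E : Set Ordinal} (hE : IsClubIn E ν) :
    IsStationaryIn E ν := fun _ hD =>
  let ⟨b, hb, _⟩ := (hE.inter hν hD).2 0 (isSuccLimit_of_aleph0_lt_cof hν).bot_lt
  ⟨b, hb⟩

theorem IsClubIn.setOf_isAccBelow (hν : ℵ₀ < ν.cof) {C : Set Ordinal} (hC : IsClubIn C ν) :
    IsClubIn {α | α < ν ∧ IsAccBelow C α} ν := by
  have hlim := isSuccLimit_of_aleph0_lt_cof hν
  refine ⟨fun α hα hαl hub => ⟨hα, hαl, fun x hx => ?_⟩, fun x hx => ?_⟩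
  · obtain ⟨δ, ⟨hδν, hδ⟩, hxδ, hδα⟩ := hub x hx
    exact ⟨δ, hC.1.mem hδν hδ, hxδ, hδα⟩
  have hstep : ∀ a < ν, ∃ b, a < b ∧ b < ν ∧ b ∈ C := fun a ha =>
    let ⟨c, hc, hac, hcν⟩ := hC.2.exists_gt hlim ha
    ⟨c, hac, hcν, hc⟩
  obtain ⟨α, hxα, hαν, hαl, hcof⟩ := exists_isSuccLimit_closed_under hν (fun _ b => b ∈ C) hstep hx
  refine ⟨α, ⟨hαν, hαl, fun β hβ => ?_⟩, hxα.le, hαν⟩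
  obtain ⟨a, b, hβa, hab, hbα, hb⟩ := hcof β hβ
  exact ⟨b, hb, hβa.trans hab, hbα⟩

theorem isClubIn_diagonal {κ : Ordinal} (hκ : IsRegularOrd κ) (hωκ : ω < κ)
    (D : Ordinal → Set Ordinal) (hD : ∀ γ < κ, IsClubIn (D γ) κ) :
    IsClubIn {α | α < κ ∧ ∀ γ < α, α ∈ D γ} κ := by
  have hcof := hκ.aleph0_lt_cof hωκ
  have hlim := isSuccLimit_of_aleph0_lt_cof hcof
  refine ⟨fun α hα hαl hub => ⟨hα, fun γ hγ => (hD γ (hγ.trans hα)).1 α hα hαl fun β hβ => ?_⟩,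
    fun x hx => ?_⟩
  · obtain ⟨δ, ⟨-, hδ⟩, hβγδ, hδα⟩ := hub (max β γ) (max_lt hβ hγ)
    exact ⟨δ, hδ γ ((le_max_right β γ).trans_lt hβγδ), (le_max_left β γ).trans_lt hβγδ, hδα⟩
  have hstep : ∀ a < κ, ∃ b, a < b ∧ b < κ ∧ ∀ γ < a, ∃ d ∈ D γ, a < d ∧ d < b := by
    intro a ha
    choose! d hdD had hdκ using fun γ (hγ : γ < a) => (hD γ (hγ.trans ha)).2.exists_gt hlim ha
    have hcard : a.card < κ.cof := Cardinal.lt_ord.mp (hκ.symm ▸ ha)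
    obtain ⟨y, hyκ, hdy⟩ := exists_forall_lt_of_card_lt_cof hcard d hdκ
    exact ⟨max y (Order.succ a), (Order.lt_succ a).trans_le (le_max_right _ _),
      max_lt hyκ (hlim.succ_lt ha), fun γ hγ =>
        ⟨d γ, hdD γ hγ, had γ hγ, (hdy γ hγ).trans_le (le_max_left _ _)⟩⟩
  obtain ⟨α, hxα, hακ, hαl, hcofα⟩ := exists_isSuccLimit_closed_under hcof _ hstep hx
  refine ⟨α, ⟨hακ, fun γ hγ => (hD γ (hγ.trans hακ)).1 α hακ hαl fun β hβ => ?_⟩, hxα.le, hακ⟩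
  obtain ⟨a, b, hβγa, -, hbα, hab⟩ := hcofα (max β γ) (max_lt hβ hγ)
  obtain ⟨d, hd, had, hdb⟩ := hab γ ((le_max_right β γ).trans_lt hβγa)
  exact ⟨d, hd, ((le_max_left β γ).trans_lt hβγa).trans had, hdb.trans hbα⟩

theorem IsStationaryIn.nonempty {S : Set Ordinal} (hS : IsStationaryIn S ν) : S.Nonempty :=
  (hS _ isClubIn_Iio).mono inter_subset_left

end Club

section Coherent

variable {κ : Ordinal} {C : Ordinal → Set Ordinal}

def accIndices (C : Ordinal → Set Ordinal) (κ γ : Ordinal) : Set Ordinal :=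
  {α | γ < α ∧ α < κ ∧ IsAccBelow (C α) γ}

theorem isAccBelow_of_isAccBelow_of_lt
    (hcoh : ∀ α β, α < β → β < κ → IsAccBelow (C β) α → C β ∩ Iio α = C α)
    {γ α ν : Ordinal} (hγα : γ < α) (hαν : α < ν) (hνκ : ν < κ) (hγ : IsAccBelow (C ν) γ)
    (hα : IsAccBelow (C ν) α) : IsAccBelow (C α) γ :=
  hcoh α ν hαν hνκ hα ▸ hγ.inter_Iio hγα.le

theorem isAccBelow_of_isStationaryIn_accIndices
    (hclub : ∀ α < κ, Order.IsSuccLimit α → IsClubIn (C α) α)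
    (hcoh : ∀ α β, α < β → β < κ → IsAccBelow (C β) α → C β ∩ Iio α = C α)
    {ν γ : Ordinal} (hνκ : ν < κ) (hν : ℵ₀ < ν.cof)
    (hS : IsStationaryIn (accIndices C κ γ ∩ Iio ν) ν) : γ < ν ∧ IsAccBelow (C ν) γ := by
  obtain ⟨α, ⟨⟨hγα, -, hγ⟩, -⟩, hαν, hα⟩ :=
    hS _ ((hclub ν hνκ (isSuccLimit_of_aleph0_lt_cof hν)).setOf_isAccBelow hν)
  exact ⟨hγα.trans hαν, hγ.mono (hcoh α ν hαν hνκ hα ▸ inter_subset_left)⟩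

theorem exists_isStationaryIn_accIndices (hκ : IsRegularOrd κ) (hωκ : ω < κ)
    (hclub : ∀ α < κ, Order.IsSuccLimit α → IsClubIn (C α) α)
    (hcoh : ∀ α β, α < β → β < κ → IsAccBelow (C β) α → C β ∩ Iio α = C α)
    (hrefl : ∀ S ⊆ Iio κ, IsClubIn S κ → ∃ ν < κ, ℵ₀ < ν.cof ∧ IsStationaryIn (S ∩ Iio ν) ν)
    {β : Ordinal} (hβ : β < κ) : ∃ γ, β < γ ∧ γ < κ ∧ IsStationaryIn (accIndices C κ γ) κ := by
  by_contra! hns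
  have hD : ∀ γ, ∃ D, IsClubIn D κ ∧
      (β < γ → γ < κ → ¬ (accIndices C κ γ ∩ D).Nonempty) := by
    intro γ
    by_cases h : β < γ ∧ γ < κ
    · obtain ⟨D, hD, hempty⟩ : ∃ D, IsClubIn D κ ∧ ¬ (accIndices C κ γ ∩ D).Nonempty := by
        simpa [IsStationaryIn] using hns γ h.1 h.2
      exact ⟨D, hD, fun _ _ => hempty⟩
    · exact ⟨Iio κ, isClubIn_Iio, fun h₁ h₂ => (h ⟨h₁, h₂⟩).elim⟩
  choose D hDclub hDdisj using hD
  have hcof := hκ.aleph0_lt_cof hωκ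
  have hΔ : IsClubIn ({α | α < κ ∧ ∀ γ < α, α ∈ D γ} ∩ Ioi β) κ :=
    (isClubIn_diagonal hκ hωκ D fun γ _ => hDclub γ).inter hcof
      (isClubIn_Ioi (isSuccLimit_of_aleph0_lt_cof hcof) hβ)
  obtain ⟨ν, hνκ, hνcof, hΔν⟩ := hrefl _ (fun α hα => hα.1.1) hΔ
  have hνl := isSuccLimit_of_aleph0_lt_cof hνcof
  have hacc := (hclub ν hνκ hνl).setOf_isAccBelow hνcof
  obtain ⟨α₁, ⟨-, hβα₁⟩, hα₁ν⟩ := hΔν.nonempty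
  obtain ⟨γ, ⟨-, hγ⟩, hβγ, hγν⟩ := hacc.2.exists_gt hνl (hβα₁.trans hα₁ν)
  obtain ⟨α, ⟨⟨⟨-, hαD⟩, -⟩, hαν⟩, ⟨-, hα⟩, hγα⟩ :=
    hΔν _ (hacc.inter hνcof (isClubIn_Ioi hνl hγν))
  exact hDdisj γ hβγ (hγν.trans hνκ) ⟨α, ⟨hγα, hαν.trans hνκ,
    isAccBelow_of_isAccBelow_of_lt hcoh hγα hαν hνκ hγ hα⟩, hαD γ hγα⟩

theorem inter_Iio_eq_of_isStationaryIn_accIndices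
    (hclub : ∀ α < κ, Order.IsSuccLimit α → IsClubIn (C α) α)
    (hcoh : ∀ α β, α < β → β < κ → IsAccBelow (C β) α → C β ∩ Iio α = C α)
    {γ γ' ν : Ordinal} (hγγ' : γ < γ') (hνκ : ν < κ) (hν : ℵ₀ < ν.cof)
    (hS : IsStationaryIn (accIndices C κ γ ∩ Iio ν) ν)
    (hS' : IsStationaryIn (accIndices C κ γ' ∩ Iio ν) ν) : C γ' ∩ Iio γ = C γ := by
  obtain ⟨-, hγ⟩ := isAccBelow_of_isStationaryIn_accIndices hclub hcoh hνκ hν hS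
  obtain ⟨hγ'ν, hγ'⟩ := isAccBelow_of_isStationaryIn_accIndices hclub hcoh hνκ hν hS'
  exact hcoh γ γ' hγγ' (hγ'ν.trans hνκ)
    (isAccBelow_of_isAccBelow_of_lt hcoh hγγ' hγ'ν hνκ hγ hγ')

theorem exists_thread_of_coherent_unbounded
    (hcoh : ∀ α β, α < β → β < κ → IsAccBelow (C β) α → C β ∩ Iio α = C α)
    {G : Set Ordinal} (hGκ : G ⊆ Iio κ) (hGunb : ∀ β < κ, ∃ γ ∈ G, β < γ)
    (hGclub : ∀ γ ∈ G, IsClubIn (C γ) γ)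
    (hGcoh : ∀ γ ∈ G, ∀ γ' ∈ G, γ < γ' → C γ' ∩ Iio γ = C γ) :
    ∃ A, IsClubIn A κ ∧ ∀ α < κ, IsAccBelow A α → A ∩ Iio α = C α := by
  set A := {x | ∃ γ ∈ G, x ∈ C γ ∧ x < γ}
  have hA : ∀ γ ∈ G, A ∩ Iio γ = C γ := by
    intro γ hγ
    ext x
    constructor
    · rintro ⟨⟨γ', hγ', hx, hxγ'⟩, hxγ⟩
      rcases lt_trichotomy γ' γ with h | rfl | h
      · exact ((hGcoh γ' hγ' γ hγ h).symm ▸ hx : x ∈ C γ ∩ Iio γ').1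
      · exact hx
      · exact hGcoh γ hγ γ' hγ' h ▸ ⟨hx, hxγ⟩
    · intro hx
      obtain ⟨γ', hγ', hγγ'⟩ := hGunb γ (hGκ hγ)
      have hx' : x ∈ C γ' ∩ Iio γ := (hGcoh γ hγ γ' hγ' hγγ').symm ▸ hx
      exact ⟨⟨γ', hγ', hx'.1, hx'.2.trans hγγ'⟩, hx'.2⟩
  have hacc : ∀ α < κ, IsAccBelow A α → ∃ γ ∈ G, α < γ ∧ IsAccBelow (C γ) α :=
    fun α hα h =>
      let ⟨γ, hγ, hαγ⟩ := hGunb α hα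
      ⟨γ, hγ, hαγ, hA γ hγ ▸ h.inter_Iio hαγ.le⟩
  refine ⟨A, ⟨fun α hα hαl hub => ?_, fun x hx => ?_⟩, fun α hα h => ?_⟩
  · obtain ⟨γ, hγ, hαγ, h⟩ := hacc α hα ⟨hαl, hub⟩
    exact ⟨γ, hγ, (hGclub γ hγ).1.mem hαγ h, hαγ⟩
  · obtain ⟨γ, hγ, hxγ⟩ := hGunb x hx
    obtain ⟨c, hc, hxc, hcγ⟩ := (hGclub γ hγ).2 x hxγ
    exact ⟨c, ⟨γ, hγ, hc, hcγ⟩, hxc, hcγ.trans (hGκ hγ)⟩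
  · obtain ⟨γ, hγ, hαγ, hαacc⟩ := hacc α hα h
    calc A ∩ Iio α = A ∩ Iio γ ∩ Iio α := by
          rw [inter_assoc, Iio_inter_Iio, min_eq_right hαγ.le]
      _ = C α := by rw [hA γ hγ, hcoh α γ hαγ (hGκ hγ) hαacc]

end Coherent

theorem stmt13_general (κ : Ordinal) (C : Ordinal → Set Ordinal)
    (hκ : IsRegularOrd κ) (hωκ : Ordinal.omega0 < κ)
    (hclub : ∀ α, α < κ → Order.IsSuccLimit α → IsClubIn (C α) α)
    (hcoh : ∀ α β, α < β → β < κ → IsAccBelow (C β) α → C β ∩ Iio α = C α)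
    (hnothread : ¬ ∃ A, IsClubIn A κ ∧
      ∀ α, α < κ → IsAccBelow A α → A ∩ Iio α = C α) :
    ∃ S₀ S₁ : Set Ordinal, S₀ ⊆ Iio κ ∧ S₁ ⊆ Iio κ ∧
      IsStationaryIn S₀ κ ∧ IsStationaryIn S₁ κ ∧
      ¬ ∃ ν, ν < κ ∧ Cardinal.aleph0 < ν.cof ∧
        IsStationaryIn (S₀ ∩ Iio ν) ν ∧ IsStationaryIn (S₁ ∩ Iio ν) ν := by
  by_contra! hrefl
  have hcof := hκ.aleph0_lt_cof hωκ
  have haccκ : ∀ γ, accIndices C κ γ ⊆ Iio κ := fun _ _ hα => hα.2.1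
  set G := {γ | γ < κ ∧ IsStationaryIn (accIndices C κ γ) κ}
  have hGunb : ∀ β < κ, ∃ γ ∈ G, β < γ := by
    intro β hβ
    obtain ⟨γ, hβγ, hγκ, hγ⟩ := exists_isStationaryIn_accIndices hκ hωκ hclub hcoh
      (fun S hS hSclub =>
        let ⟨ν, hνκ, hν, hSν, _⟩ :=
          hrefl S S hS hS (hSclub.isStationaryIn hcof) (hSclub.isStationaryIn hcof)
        ⟨ν, hνκ, hν, hSν⟩) hβ
    exact ⟨γ, ⟨hγκ, hγ⟩, hβγ⟩
  have hGclub : ∀ γ ∈ G, IsClubIn (C γ) γ := fun γ hγ =>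
    let ⟨_, hα⟩ := hγ.2.nonempty
    hclub γ hγ.1 hα.2.2.1
  have hGcoh : ∀ γ ∈ G, ∀ γ' ∈ G, γ < γ' → C γ' ∩ Iio γ = C γ := fun γ hγ γ' hγ' hγγ' =>
    let ⟨_, hνκ, hν, hS, hS'⟩ := hrefl _ _ (haccκ γ) (haccκ γ') hγ.2 hγ'.2
    inter_Iio_eq_of_isStationaryIn_accIndices hclub hcoh hγγ' hνκ hν hS hS'
  exact hnothread (exists_thread_of_coherent_unbounded hcoh (fun _ hγ => hγ.1) hGunb hGclub hGcoh)

/-- a `□(κ)`-sequence yields two stationary subsets of `κ` with no common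
reflection point. -/
theorem stmt13 (κ : Ordinal) (C : Ordinal → Set Ordinal)
    (hκ : IsRegularOrd κ) (hωκ : Ordinal.omega0 < κ)
    (hclub : ∀ α, α < κ → Order.IsSuccLimit α → IsClubIn (C α) α)
    (hsucc : ∀ α, α < κ → C (α + 1) = {α})
    (hcoh : ∀ α β, α < β → β < κ → IsAccBelow (C β) α → C β ∩ Iio α = C α)
    (hnothread : ¬ ∃ A, IsClubIn A κ ∧
      ∀ α, α < κ → IsAccBelow A α → A ∩ Iio α = C α) :
    ∃ S₀ S₁ : Set Ordinal, S₀ ⊆ Iio κ ∧ S₁ ⊆ Iio κ ∧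
      IsStationaryIn S₀ κ ∧ IsStationaryIn S₁ κ ∧
      ¬ ∃ ν, ν < κ ∧ Cardinal.aleph0 < ν.cof ∧
        IsStationaryIn (S₀ ∩ Iio ν) ν ∧ IsStationaryIn (S₁ ∩ Iio ν) ν :=
  stmt13_general κ C hκ hωκ hclub hcoh hnothread
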